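/- Let n ≥ 1 and let y : Fin n → ℝ be a monotone (nondecreasing) tuple. Define f : EuclideanSpace ℝ (Fin n) → ℝ by f(θ) = min over permutations σ of Fin n of ∑ i, (θ i − y (σ i))². If θ is strictly increasing (θ i < θ j whenever i < j), then f is Fréchet-differentiable at θ with derivative the linear map v ↦ ∑ i, 2 (θ i − y i) · v i; that is, the gradient of the squared matching distance at θ has i-th coordinate 2(θ i − y i). -/

import Mathlib

/-!
Near a strictly increasing `θ` every point is still increasing, and for increasing `x` the
rearrangement inequality makes the identity an optimal matching with the monotone `y`. So the
squared matching distance agrees near `θ` with the smooth function `x ↦ ∑ i, (x i - y i) ^ 2`,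
whose derivative is the stated one.
-/

open Topology

section Rearrangement

variable {ι α : Type*} [Fintype ι] [CommRing α] [LinearOrder α] [IsStrictOrderedRing α]
  {x y : ι → α}

theorem Monovary.sum_sub_sq_le_sum_sub_comp_perm_sq (hxy : Monovary x y) (σ : Equiv.Perm ι) :
    ∑ i, (x i - y i) ^ 2 ≤ ∑ i, (x i - y (σ i)) ^ 2 := by
  have expand : ∀ z : ι → α,
      ∑ i, (x i - z i) ^ 2 = ∑ i, x i ^ 2 - 2 * ∑ i, x i * z i + ∑ i, z i ^ 2 := by
    intro z
    rw [Finset.mul_sum, ← Finset.sum_sub_distrib, ← Finset.sum_add_distrib]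
    exact Finset.sum_congr rfl fun i _ => by ring
  rw [expand, expand, Equiv.sum_comp σ fun i => y i ^ 2]
  linarith [hxy.sum_mul_comp_perm_le_sum_mul (σ := σ)]

end Rearrangement

theorem Monovary.iInf_sum_sub_comp_perm_sq {ι : Type*} [Fintype ι] [DecidableEq ι]
    {x y : ι → ℝ} (hxy : Monovary x y) :
    ⨅ σ : Equiv.Perm ι, ∑ i, (x i - y (σ i)) ^ 2 = ∑ i, (x i - y i) ^ 2 :=
  le_antisymm (ciInf_le (Set.finite_range _).bddBelow 1)
    (le_ciInf hxy.sum_sub_sq_le_sum_sub_comp_perm_sq)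

theorem isOpen_setOf_strictMono {ι α : Type*} [Finite ι] [Preorder ι] [LinearOrder α]
    [TopologicalSpace α] [OrderClosedTopology α] :
    IsOpen {f : ι → α | StrictMono f} := by
  have : {f : ι → α | StrictMono f} = ⋂ (i) (j), {f | i < j → f i < f j} := by
    ext f
    simp only [Set.mem_iInter, Set.mem_ofPred_eq, StrictMono]
  rw [this]
  refine isOpen_iInter_of_finite fun i => isOpen_iInter_of_finite fun j => ?_
  by_cases hij : i < j
  · simpa only [hij, forall_const] using
      isOpen_lt (continuous_apply (A := fun _ => α) i) (continuous_apply j)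
  · simp only [hij, false_implies, Set.ofPred_true, isOpen_univ]

theorem hasFDerivAt_sum_sub_sq {ι : Type*} [Fintype ι] (y : ι → ℝ) (θ : EuclideanSpace ℝ ι) :
    HasFDerivAt (fun x : EuclideanSpace ℝ ι => ∑ i, (x i - y i) ^ 2)
      (∑ i, (2 * (θ i - y i)) • (EuclideanSpace.proj i : EuclideanSpace ℝ ι →L[ℝ] ℝ)) θ := by
  refine HasFDerivAt.fun_sum fun i _ => ?_
  simpa using ((EuclideanSpace.proj (𝕜 := ℝ) i).hasFDerivAt.sub_const (y i)).pow 2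

theorem matching_distance_gradient_general (n : ℕ) (y : Fin n → ℝ)
    (hy : Monotone y) (θ : EuclideanSpace ℝ (Fin n))
    (hθ : ∀ i j : Fin n, i < j → θ i < θ j) :
    HasFDerivAt
      (fun x : EuclideanSpace ℝ (Fin n) =>
        ⨅ σ : Equiv.Perm (Fin n), ∑ i, (x i - y (σ i)) ^ 2)
      (∑ i, (2 * (θ i - y i)) •
        (EuclideanSpace.proj i : EuclideanSpace ℝ (Fin n) →L[ℝ] ℝ)) θ := by
  have near_strictMono : ∀ᶠ x : EuclideanSpace ℝ (Fin n) in 𝓝 θ, StrictMono x :=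
    (isOpen_setOf_strictMono.preimage (PiLp.continuous_ofLp 2 _)).mem_nhds
      fun i j hij => hθ i j hij
  refine (hasFDerivAt_sum_sub_sq y θ).congr_of_eventuallyEq ?_
  filter_upwards [near_strictMono] with x hx
  exact (hx.monotone.monovary hy).iInf_sum_sub_comp_perm_sq

/-- Gradient of the squared matching distance: for a monotone tuple `y : Fin n → ℝ`, the
function `f θ = min over permutations σ of ∑ i, (θ i - y (σ i))²` is Fréchet-differentiable
at every strictly increasing `θ`, with derivative `v ↦ ∑ i, 2 (θ i - y i) * v i`. -/
theorem matching_distance_gradient (n : ℕ) (hn : 1 ≤ n) (y : Fin n → ℝ)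
    (hy : Monotone y) (θ : EuclideanSpace ℝ (Fin n))
    (hθ : ∀ i j : Fin n, i < j → θ i < θ j) :
    HasFDerivAt
      (fun x : EuclideanSpace ℝ (Fin n) =>
        ⨅ σ : Equiv.Perm (Fin n), ∑ i, (x i - y (σ i)) ^ 2)
      (∑ i, (2 * (θ i - y i)) •
        (EuclideanSpace.proj i : EuclideanSpace ℝ (Fin n) →L[ℝ] ℝ)) θ :=
  matching_distance_gradient_general n y hy θ hθ
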